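/- The average codeword length of C_I under the Gauss–Kuzmin distribution, H = ∑_{b=1}^∞ (2⌊log₂ b⌋ + 1) · log₂(1 + 1/(b(b+2))), is finite and satisfies 3.50 < H < 3.51. -/

import Mathlib

/-!
The mass `μ(b) = log₂(1 + 1/(b(b+2)))` telescopes: `μ(b) = g(b) - g(b+1)` with
`g(m) = log₂((m+1)/m)`, the Gauss–Kuzmin mass of `[m, ∞)`. On the dyadic block `2^k ≤ b < 2^(k+1)`
the codeword length is constantly `2k+1` and the mass of the block is `a_k - a_(k+1)`, where
`a_k = g(2^k) = log₂(1 + 2^(-k))`. Summation by parts gives `H = 2 ∑ a_k - 1`. The first thirteen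
`a_k` add up to the base-2 logarithm of an explicit rational, and the remaining ones to at most
`3 · 2^(-13)`, which pins `∑ a_k` in `(9/4, 451/200)`.
-/

open Real Filter Finset Topology

/-- `gkMass 0 = 0` since `1 / 0 = 0`, so sums over `ℕ` and over `ℕ+` agree. -/
noncomputable def gkMass (b : ℕ) : ℝ := logb 2 (1 + 1 / ((b : ℝ) * (b + 2)))

noncomputable def gkTail (m : ℕ) : ℝ := logb 2 ((m + 1) / m)

noncomputable def dyadicTail (k : ℕ) : ℝ := logb 2 (1 + (1 / 2) ^ k)

def codeLength (b : ℕ) : ℕ := 2 * Nat.log 2 b + 1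

@[simp]
lemma gkMass_zero : gkMass 0 = 0 := by simp [gkMass]

lemma gkMass_nonneg (b : ℕ) : 0 ≤ gkMass b :=
  logb_nonneg one_lt_two (le_add_of_nonneg_right (by positivity))

lemma gkMass_eq_gkTail_sub {b : ℕ} (hb : 0 < b) : gkMass b = gkTail b - gkTail (b + 1) := by
  have hb' : (0 : ℝ) < b := by exact_mod_cast hb
  have hsplit : 1 + 1 / ((b : ℝ) * (b + 2)) = ((b + 1) / b) / ((b + 1 + 1) / (b + 1)) := by
    field_simp
    ring
  rw [gkMass, hsplit, logb_div (by positivity) (by positivity), gkTail, gkTail]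
  push_cast
  rfl

lemma sum_Ico_gkMass {m n : ℕ} (hm : 0 < m) (hmn : m ≤ n) :
    ∑ b ∈ Ico m n, gkMass b = gkTail m - gkTail n := by
  rw [sum_congr rfl fun b hb => gkMass_eq_gkTail_sub (hm.trans_le (mem_Ico.1 hb).1),
    ← neg_sub, ← sum_Ico_sub (fun b => gkTail b) hmn, ← sum_neg_distrib]
  simp only [neg_sub]

lemma gkTail_two_pow (k : ℕ) : gkTail (2 ^ k) = dyadicTail k := by
  rw [gkTail, dyadicTail, add_div, div_self (by positivity)]
  push_cast
  rw [one_div_pow, one_div, add_comm]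

lemma sum_range_two_pow_codeLength_mul_gkMass (K : ℕ) :
    ∑ b ∈ range (2 ^ K), (codeLength b : ℝ) * gkMass b =
      ∑ k ∈ range K, (2 * k + 1) * (dyadicTail k - dyadicTail (k + 1)) := by
  induction K with
  | zero => simp
  | succ K ih =>
    have hle : 2 ^ K ≤ 2 ^ (K + 1) := Nat.pow_le_pow_right two_pos K.le_succ
    have hblock : ∀ b ∈ Ico (2 ^ K) (2 ^ (K + 1)),
        (codeLength b : ℝ) * gkMass b = (2 * K + 1) * gkMass b := by
      intro b hb
      rw [mem_Ico] at hb
      rw [codeLength, Nat.log_eq_of_pow_le_of_lt_pow hb.1 hb.2]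
      push_cast
      rfl
    rw [← sum_range_add_sum_Ico _ hle, ih, sum_range_succ, sum_congr rfl hblock, ← mul_sum,
      sum_Ico_gkMass (by positivity) hle, gkTail_two_pow, gkTail_two_pow]

lemma sum_range_odd_mul_sub {R : Type*} [CommRing R] (a : ℕ → R) (K : ℕ) :
    ∑ k ∈ range K, (2 * k + 1) * (a k - a (k + 1)) =
      2 * ∑ k ∈ range K, a k - a 0 + a K - 2 * K * a K := by
  induction K with
  | zero => simp
  | succ K ih =>
    rw [sum_range_succ, ih, sum_range_succ]
    push_cast
    ring

lemma dyadicTail_zero : dyadicTail 0 = 1 := by norm_num [dyadicTail]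

lemma dyadicTail_nonneg (k : ℕ) : 0 ≤ dyadicTail k :=
  logb_nonneg one_lt_two (le_add_of_nonneg_right (by positivity))

lemma dyadicTail_le (k : ℕ) : dyadicTail k ≤ 3 / 2 * (1 / 2) ^ k := by
  have hlog : log (1 + (1 / 2 : ℝ) ^ k) ≤ (1 / 2) ^ k := by
    linarith [log_le_sub_one_of_pos (x := 1 + (1 / 2 : ℝ) ^ k) (by positivity)]
  have hlog2 : 2 / 3 < log 2 := by linarith [log_two_gt_d9]
  rw [dyadicTail, logb, div_le_iff₀ (by positivity)]
  nlinarith [pow_nonneg (by norm_num : (0 : ℝ) ≤ 1 / 2) k]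

lemma summable_dyadicTail : Summable dyadicTail :=
  .of_nonneg_of_le dyadicTail_nonneg dyadicTail_le
    ((summable_geometric_of_lt_one (by norm_num) (by norm_num)).mul_left _)

lemma tendsto_dyadicTail_atTop : Tendsto dyadicTail atTop (𝓝 0) :=
  summable_dyadicTail.tendsto_atTop_zero

lemma tendsto_nat_mul_dyadicTail_atTop : Tendsto (fun k : ℕ => k * dyadicTail k) atTop (𝓝 0) := by
  refine squeeze_zero (fun k => mul_nonneg k.cast_nonneg (dyadicTail_nonneg k))
    (fun k => mul_le_mul_of_nonneg_left (dyadicTail_le k) k.cast_nonneg) ?_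
  simpa [mul_left_comm] using
    (tendsto_self_mul_const_pow_of_lt_one (by norm_num : (0 : ℝ) ≤ 1 / 2) (by norm_num)).const_mul
      (3 / 2)

lemma hasSum_of_nonneg_of_tendsto_sum_range_comp {f : ℕ → ℝ} (hf : ∀ n, 0 ≤ f n) {φ : ℕ → ℕ}
    (hφ : Tendsto φ atTop atTop) {L : ℝ}
    (hL : Tendsto (fun K => ∑ n ∈ range (φ K), f n) atTop (𝓝 L)) : HasSum f L :=
  (hasSum_iff_tendsto_nat_of_nonneg hf L).2 <|
    (tendsto_iff_tendsto_subseq_of_monotone (sum_mono_set_of_nonneg hf |>.comp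
      fun _ _ => range_subset_range.2) hφ).2 hL

lemma hasSum_codeLength_mul_gkMass :
    HasSum (fun b => (codeLength b : ℝ) * gkMass b) (2 * ∑' k, dyadicTail k - 1) := by
  refine hasSum_of_nonneg_of_tendsto_sum_range_comp
    (fun b => mul_nonneg (codeLength b).cast_nonneg (gkMass_nonneg b))
    (tendsto_pow_atTop_atTop_of_one_lt one_lt_two) ?_
  simp only [sum_range_two_pow_codeLength_mul_gkMass, sum_range_odd_mul_sub, dyadicTail_zero]
  have := ((summable_dyadicTail.hasSum.tendsto_sum_nat.const_mul 2).sub_const 1).add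
    tendsto_dyadicTail_atTop |>.sub (tendsto_nat_mul_dyadicTail_atTop.const_mul 2)
  simpa [mul_assoc] using this

lemma div_lt_logb_of_pow_lt {b x : ℝ} (hb : 1 < b) {p q : ℕ} (hq : 0 < q) (h : b ^ p < x ^ q) :
    (p : ℝ) / q < logb b x := by
  have := logb_lt_logb hb (by positivity) h
  rw [logb_pow, logb_pow, logb_self_eq_one hb] at this
  rw [div_lt_iff₀ (by positivity)]
  linarith

lemma logb_lt_div_of_pow_lt {b x : ℝ} (hb : 1 < b) (hx : 0 < x) {p q : ℕ} (hq : 0 < q)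
    (h : x ^ q < b ^ p) : logb b x < p / q := by
  have := logb_lt_logb hb (by positivity) h
  rw [logb_pow, logb_pow, logb_self_eq_one hb] at this
  rw [lt_div_iff₀ (by positivity)]
  linarith

lemma sum_range_thirteen_dyadicTail :
    ∑ k ∈ range 13, dyadicTail k = logb 2 (720413716161839357604375 / 2 ^ 77) := by
  simp only [dyadicTail]
  rw [← logb_prod _ _ fun k _ => by positivity]
  norm_num [prod_range_succ]

lemma tsum_dyadicTail_nat_add_le (n : ℕ) : ∑' k, dyadicTail (k + n) ≤ 3 * (1 / 2) ^ n := by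
  have hgeom : HasSum (fun k : ℕ => 3 / 2 * (1 / 2) ^ n * (1 / 2 : ℝ) ^ k) (3 * (1 / 2) ^ n) := by
    have := (hasSum_geometric_of_lt_one (by norm_num : (0 : ℝ) ≤ 1 / 2) (by norm_num)).mul_left
      (3 / 2 * (1 / 2 : ℝ) ^ n)
    rwa [show (3 / 2 * (1 / 2 : ℝ) ^ n) * (1 - 1 / 2)⁻¹ = 3 * (1 / 2) ^ n by ring] at this
  refine hasSum_le (fun k => ?_) ((summable_nat_add_iff n).2 summable_dyadicTail).hasSum hgeom
  calc dyadicTail (k + n) ≤ 3 / 2 * (1 / 2) ^ (k + n) := dyadicTail_le (k + n)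
    _ = 3 / 2 * (1 / 2) ^ n * (1 / 2) ^ k := by ring

lemma tsum_dyadicTail_mem_Ioo : ∑' k, dyadicTail k ∈ Set.Ioo (9 / 4) (451 / 200) := by
  have hsplit := summable_dyadicTail.sum_add_tsum_nat_add 13
  rw [sum_range_thirteen_dyadicTail] at hsplit
  have hlo := div_lt_logb_of_pow_lt one_lt_two (by norm_num : 0 < 4)
    (by norm_num : (2 : ℝ) ^ 9 < (720413716161839357604375 / 2 ^ 77) ^ 4)
  have hhi := logb_lt_div_of_pow_lt one_lt_two (by norm_num) (by norm_num : 0 < 55)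
    (by norm_num : ((720413716161839357604375 : ℝ) / 2 ^ 77) ^ 55 < 2 ^ 124)
  have htail_nonneg : 0 ≤ ∑' k, dyadicTail (k + 13) :=
    tsum_nonneg fun k => dyadicTail_nonneg (k + 13)
  have htail_le := tsum_dyadicTail_nat_add_le 13
  constructor <;> norm_num at * <;> linarith

/-- Average codeword length of `C_I` (length `2⌊log₂ b⌋+1`) under the
Gauss–Kuzmin distribution: it is finite (summable) and lies in `(3.50, 3.51)`. -/
theorem CI_average_length :
    Summable (fun b : ℕ+ =>
      ((2 * Nat.log 2 (b : ℕ) + 1 : ℕ) : ℝ) * Real.logb 2 (1 + 1 / ((b : ℝ) * (b + 2)))) ∧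
    3.50 < ∑' b : ℕ+,
      ((2 * Nat.log 2 (b : ℕ) + 1 : ℕ) : ℝ) * Real.logb 2 (1 + 1 / ((b : ℝ) * (b + 2))) ∧
    (∑' b : ℕ+,
      ((2 * Nat.log 2 (b : ℕ) + 1 : ℕ) : ℝ) * Real.logb 2 (1 + 1 / ((b : ℝ) * (b + 2)))) < 3.51 := by
  have hsum : HasSum (fun b : ℕ+ => (codeLength b : ℝ) * gkMass b)
      (2 * ∑' k, dyadicTail k - 1) := by
    rw [hasSum_pnat_iff (f := fun b => (codeLength b : ℝ) * gkMass b)]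
    simpa only [gkMass_zero, mul_zero, add_zero] using hasSum_codeLength_mul_gkMass
  obtain ⟨hlo, hhi⟩ := tsum_dyadicTail_mem_Ioo
  refine ⟨hsum.summable, ?_, ?_⟩ <;> erw [hsum.tsum_eq] <;> norm_num <;> linarith
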